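/- arXiv:1509.01958 — 2 statements merged into one kernel-verified Lean document; each statement's English description precedes it below -/
import Mathlib

section
/- For every k ≥ 0 and every i > k, the identity (a_i)^(∏_{j=0}^{k} N_{i−j}) = (a_{i−k−1})^(∏_{j=0}^{k} (N_{i−j} + 1)) holds. -/
/-- The `j`-th Fermat number `N_j = 2^(2^j) + 1`. -/
def fermatN (j : ℕ) : ℕ := 2 ^ 2 ^ j + 1

/-- `conwayL c n` is the subfield `L_{n-1}` of the algebraic closure of `F_2`
generated over `F_2` by `c 0, …, c (n-1)`; in particular `conwayL c 0 = ⊥ = F_2`. -/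
noncomputable def conwayL (c : ℕ → AlgebraicClosure (ZMod 2)) (n : ℕ) :
    IntermediateField (ZMod 2) (AlgebraicClosure (ZMod 2)) :=
  IntermediateField.adjoin (ZMod 2) (c '' Set.Iio n)

/-!
Write `q m = 2 ^ 2 ^ m` and `a_{-1} = 1`. By strong induction on `m`, `c m ^ q m = c m + 1`.
Indeed, the induction hypothesis gives `c j ^ q (j + 1) = c j` for `j < m`, so every element of
`L_{m-1}` is a root of `X ^ q m - X`; and adjoining `c j ∉ L_{j-1}` at least squares the
cardinality, so `L_{m-1}` has at least `q m` elements and is therefore the full set of roots.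
The Frobenius power `x ↦ x ^ q m` fixes `a_{m-1} ∈ L_{m-1}`, so it sends `c m` to a root of
`X ^ 2 + X + a_{m-1}`, that is, to `c m` or `c m + 1`; the first would put `c m` into `L_{m-1}`.

Consequently `c (n + 1) ^ N (n + 1) = c (n + 1) ^ 2 + c (n + 1) = a n`, hence
`a (n + 1) ^ N (n + 1) = a n ^ (N (n + 1) + 1)`, and the theorem follows by raising these
identities to powers and telescoping.
-/

open Finset Polynomial

theorem pow_pow_eq_self_of_pow_eq_self {M : Type*} [Monoid M] {x : M} {q : ℕ} (h : x ^ q = x) :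
    ∀ t : ℕ, x ^ q ^ t = x
  | 0 => pow_one x
  | t + 1 => by rw [pow_succ, pow_mul, pow_pow_eq_self_of_pow_eq_self h t, h]

theorem pow_two_pow_sq_eq_self_of_eq_add_one {R : Type*} [CommRing R] [CharP R 2] {x : R} {q : ℕ}
    (h : x ^ 2 ^ q = x + 1) : x ^ (2 ^ q) ^ 2 = x := by
  rw [sq, pow_mul, h, add_pow_char_pow, h, one_pow, add_assoc, CharTwo.add_self_eq_zero, add_zero]

theorem eq_or_eq_add_one_of_sq_add_self_eq {R : Type*} [CommRing R] [IsDomain R] [CharP R 2]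
    {x y : R} (h : y ^ 2 + y = x ^ 2 + x) : y = x ∨ y = x + 1 := by
  have hprod : (y + x) * (y + x + 1) = 0 := by
    linear_combination h + (x * y + x ^ 2 + x) * CharTwo.two_eq_zero (R := R)
  rcases mul_eq_zero.mp hprod with h0 | h1
  · exact Or.inl (CharTwo.add_eq_zero.mp h0)
  · exact Or.inr (by linear_combination h1 - (x + 1) * CharTwo.two_eq_zero (R := R))

section Field

variable {K : Type*} [Field K] {q : ℕ}

theorem setOf_pow_eq_self_eq_rootSet (hq : 1 < q) :
    {x : K | x ^ q = x} = (X ^ q - X : K[X]).rootSet K := by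
  ext x
  simp [mem_rootSet, FiniteField.X_pow_card_sub_X_ne_zero K hq, sub_eq_zero]

theorem Set.Finite.of_forall_pow_eq_self {s : Set K} (hq : 1 < q)
    (hs : ∀ x ∈ s, x ^ q = x) : s.Finite := by
  have hfin : {x : K | x ^ q = x}.Finite := by
    rw [setOf_pow_eq_self_eq_rootSet hq]
    exact rootSet_finite _ K
  exact hfin.subset hs

theorem mem_of_pow_eq_self_of_le_ncard {s : Set K} (hq : 1 < q)
    (hs : ∀ y ∈ s, y ^ q = y) (hcard : q ≤ s.ncard) {x : K} (hx : x ^ q = x) : x ∈ s := by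
  have hroots := ncard_rootSet_le (X ^ q - X : K[X]) K
  rw [FiniteField.X_pow_card_sub_X_natDegree_eq K hq, ← setOf_pow_eq_self_eq_rootSet hq] at hroots
  rw [Set.eq_of_subset_of_ncard_le hs (hroots.trans hcard)
    (Set.Finite.of_forall_pow_eq_self hq fun _ h => h)]
  exact hx

end Field

namespace IntermediateField

theorem pow_eq_self_of_mem_adjoin {p : ℕ} [Fact p.Prime] {K : Type*} [Field K]
    [Algebra (ZMod p) K] [CharP K p] {S : Set K} {n : ℕ} (hS : ∀ s ∈ S, s ^ p ^ n = s) {x : K}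
    (hx : x ∈ adjoin (ZMod p) S) : x ^ p ^ n = x := by
  induction hx using adjoin_induction with
  | mem s hs => exact hS s hs
  | algebraMap z => rw [← map_pow, ZMod.pow_card_pow]
  | add a b _ _ ha hb => rw [add_pow_char_pow, ha, hb]
  | inv a _ ha => rw [inv_pow, ha]
  | mul a b _ _ ha hb => rw [mul_pow, ha, hb]

theorem card_sq_le_card_of_notMem {k K : Type*} [Field k] [Field K] [Algebra k K]
    {E F : IntermediateField k K} [Finite F] (hEF : E ≤ F) {x : K} (hxF : x ∈ F)
    (hxE : x ∉ E) :
    Nat.card E ^ 2 ≤ Nat.card F := by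
  let f : E × E → F := fun u =>
    ⟨u.1 + u.2 * x, add_mem (hEF u.1.2) (mul_mem (hEF u.2.2) hxF)⟩
  have hf : Function.Injective f := by
    rintro ⟨u₁, v₁⟩ ⟨u₂, v₂⟩ huv
    have huv : (u₁ : K) + v₁ * x = u₂ + v₂ * x := congrArg Subtype.val huv
    have hv : v₁ = v₂ := by
      by_contra hne
      have hne : (v₂ - v₁ : K) ≠ 0 := sub_ne_zero.mpr (Subtype.coe_ne_coe.mpr (Ne.symm hne))
      apply hxE
      have hx : x = (u₁ - u₂) * (v₂ - v₁ : K)⁻¹ := by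
        rw [eq_mul_inv_iff_mul_eq₀ hne]
        linear_combination -huv
      rw [hx]
      exact mul_mem (sub_mem u₁.2 u₂.2) (inv_mem (sub_mem v₂.2 v₁.2))
    subst hv
    simpa using huv
  simpa [sq] using Nat.card_le_card_of_injective f hf

end IntermediateField

theorem pow_prod_range_eq_of_pow_succ_eq {M : Type*} [Monoid M] {a : ℕ → M} {e f : ℕ → ℕ}
    (h : ∀ n, a (n + 1) ^ e (n + 1) = a n ^ f (n + 1)) {k i : ℕ} (hki : k < i) :
    a i ^ ∏ j ∈ range (k + 1), e (i - j) =
      a (i - k - 1) ^ ∏ j ∈ range (k + 1), f (i - j) := by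
  induction k with
  | zero =>
    obtain ⟨n, rfl⟩ := Nat.exists_eq_add_of_lt hki
    simpa using h n
  | succ k ih =>
    obtain ⟨n, hn⟩ : ∃ n, i - (k + 1) = n + 1 := ⟨i - k - 2, by omega⟩
    rw [prod_range_succ _ (k + 1), prod_range_succ _ (k + 1), pow_mul, ih (by omega),
      pow_right_comm, Nat.sub_sub, hn, h n, ← pow_mul, mul_comm, Nat.add_sub_cancel]

section Conway

variable {c : ℕ → AlgebraicClosure (ZMod 2)}

theorem conwayL_mono : Monotone (conwayL c) := fun _ _ h =>
  IntermediateField.adjoin.mono _ _ _ (Set.image_mono (Set.Iio_subset_Iio h))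

theorem mem_conwayL {j m : ℕ} (h : j < m) : c j ∈ conwayL c m :=
  IntermediateField.subset_adjoin _ _ ⟨j, h, rfl⟩

theorem prod_range_mem_conwayL (m : ℕ) : ∏ j ∈ range m, c j ∈ conwayL c m :=
  prod_mem fun _ hj => mem_conwayL (mem_range.mp hj)

theorem pow_eq_self_of_mem_conwayL {m : ℕ} (h : ∀ j < m, c j ^ 2 ^ 2 ^ j = c j + 1) {x}
    (hx : x ∈ conwayL c m) : x ^ 2 ^ 2 ^ m = x := by
  refine IntermediateField.pow_eq_self_of_mem_adjoin ?_ hx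
  rintro _ ⟨j, hj, rfl⟩
  have hj : j + 1 ≤ m := hj
  rw [← Nat.add_sub_cancel' hj, pow_add, pow_mul]
  refine pow_pow_eq_self_of_pow_eq_self ?_ _
  rw [pow_succ, pow_mul]
  exact pow_two_pow_sq_eq_self_of_eq_add_one (h j hj)

theorem conway_sq_add_self (hc0 : c 0 ^ 2 + c 0 + 1 = 0)
    (hrec : ∀ i : ℕ, c (i + 1) ^ 2 + c (i + 1) + ∏ j ∈ Finset.range (i + 1), c j = 0) :
    ∀ m, c m ^ 2 + c m = ∏ j ∈ range m, c j
  | 0 => CharTwo.add_eq_zero.mp hc0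
  | i + 1 => CharTwo.add_eq_zero.mp (hrec i)

theorem conway_notMem_conwayL (hc0 : c 0 ^ 2 + c 0 + 1 = 0)
    (hnot : ∀ i : ℕ, c (i + 1) ∉ conwayL c (i + 1)) : ∀ m, c m ∉ conwayL c m
  | 0 => fun h => by
    have hfix : c 0 ^ 2 = c 0 := pow_eq_self_of_mem_conwayL (fun j hj => absurd hj j.not_lt_zero) h
    simp [hfix, CharTwo.add_self_eq_zero] at hc0
  | i + 1 => hnot i

theorem two_pow_two_pow_le_card_conwayL (hnot : ∀ j, c j ∉ conwayL c j) :
    ∀ m, Finite (conwayL c m) → 2 ^ 2 ^ m ≤ Nat.card (conwayL c m)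
  | 0, _ => Finite.one_lt_card
  | m + 1, _ => by
    have hle := conwayL_mono (c := c) m.le_succ
    have hfin : Finite (conwayL c m) :=
      Finite.of_injective _ (IntermediateField.inclusion_injective hle)
    calc 2 ^ 2 ^ (m + 1) = (2 ^ 2 ^ m) ^ 2 := by rw [pow_succ, pow_mul]
      _ ≤ Nat.card (conwayL c m) ^ 2 :=
        Nat.pow_le_pow_left (two_pow_two_pow_le_card_conwayL hnot m hfin) 2
      _ ≤ Nat.card (conwayL c (m + 1)) :=
        IntermediateField.card_sq_le_card_of_notMem hle (mem_conwayL m.lt_succ_self) (hnot m)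

theorem conway_pow_two_pow_two_pow (hc0 : c 0 ^ 2 + c 0 + 1 = 0)
    (hrec : ∀ i : ℕ, c (i + 1) ^ 2 + c (i + 1) + ∏ j ∈ Finset.range (i + 1), c j = 0)
    (hnot : ∀ i : ℕ, c (i + 1) ∉ conwayL c (i + 1)) (m : ℕ) :
    c m ^ 2 ^ 2 ^ m = c m + 1 := by
  induction m using Nat.strong_induction_on with
  | _ m ih =>
  have hq : 1 < 2 ^ 2 ^ m := Nat.one_lt_two_pow (by positivity)
  have hfix : ∀ x ∈ SetLike.coe (conwayL c m), x ^ 2 ^ 2 ^ m = x := fun x hx =>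
    pow_eq_self_of_mem_conwayL ih hx
  have hcard : 2 ^ 2 ^ m ≤ (SetLike.coe (conwayL c m)).ncard := by
    rw [← Nat.card_coe_set_eq]
    exact two_pow_two_pow_le_card_conwayL (conway_notMem_conwayL hc0 hnot) m
      (Set.Finite.of_forall_pow_eq_self hq hfix).to_subtype
  have hroot : (c m ^ 2 ^ 2 ^ m) ^ 2 + c m ^ 2 ^ 2 ^ m = c m ^ 2 + c m := by
    rw [← pow_right_comm, ← add_pow_char_pow, conway_sq_add_self hc0 hrec,
      hfix _ (prod_range_mem_conwayL m)]
  refine (eq_or_eq_add_one_of_sq_add_self_eq hroot).resolve_left fun h => ?_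
  exact conway_notMem_conwayL hc0 hnot m (mem_of_pow_eq_self_of_le_ncard hq hfix hcard h)

theorem conway_prod_pow_fermatN (hc0 : c 0 ^ 2 + c 0 + 1 = 0)
    (hrec : ∀ i : ℕ, c (i + 1) ^ 2 + c (i + 1) + ∏ j ∈ Finset.range (i + 1), c j = 0)
    (hnot : ∀ i : ℕ, c (i + 1) ∉ conwayL c (i + 1)) (n : ℕ) :
    (∏ j ∈ range (n + 2), c j) ^ fermatN (n + 1)
      = (∏ j ∈ range (n + 1), c j) ^ (fermatN (n + 1) + 1) := by
  have hc := conway_pow_two_pow_two_pow hc0 hrec hnot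
  have hnorm : c (n + 1) ^ (2 ^ 2 ^ (n + 1) + 1) = ∏ j ∈ range (n + 1), c j := by
    rw [pow_succ, hc]
    linear_combination conway_sq_add_self hc0 hrec (n + 1)
  rw [prod_range_succ, fermatN, mul_pow, hnorm, pow_succ _ (_ + 1)]

end Conway

/-- For every `k ≥ 0` and every `i > k`,
`(a_i)^(∏_{j=0}^{k} N_{i−j}) = (a_{i−k−1})^(∏_{j=0}^{k} (N_{i−j} + 1))`,
where `a_m = ∏_{j=0}^{m} c_j`. -/
theorem conway_a_pow_prod_fermat (c : ℕ → AlgebraicClosure (ZMod 2))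
    (hc0 : c 0 ^ 2 + c 0 + 1 = 0)
    (hrec : ∀ i : ℕ, c (i + 1) ^ 2 + c (i + 1) + ∏ j ∈ Finset.range (i + 1), c j = 0)
    (hnot : ∀ i : ℕ, c (i + 1) ∉ conwayL c (i + 1))
    (k i : ℕ) (hik : k < i) :
    (∏ j ∈ Finset.range (i + 1), c j) ^ (∏ j ∈ Finset.range (k + 1), fermatN (i - j))
      = (∏ j ∈ Finset.range (i - k), c j) ^ (∏ j ∈ Finset.range (k + 1), (fermatN (i - j) + 1)) := by
  have h := pow_prod_range_eq_of_pow_succ_eq (a := fun n => ∏ j ∈ range (n + 1), c j)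
    (f := fun n => fermatN n + 1) (conway_prod_pow_fermatN hc0 hrec hnot) hik
  rwa [show i - k - 1 + 1 = i - k by omega] at h
end

section
/- For every u ≥ 1, if (c_u)^l ∈ L_{u−1} for a positive integer l, then the greatest common divisor of l and N_u is greater than 1. -/
/-!
Let `K = L_{u-1}`, a field with `q = 2^(2^u)` elements, and `x = c_u`, a root of `X² + X + a`
for some `a ∈ K` but not in `K`. The Frobenius `y ↦ y^q` fixes `K` pointwise but not `x`, so it
maps `x` to the other root `-1 - x`, whence `x^(q+1) = x (-1 - x) = a ∈ K`. The exponents `n`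
with `x^n ∈ K` are closed under `gcd`, so `gcd l (q+1) = 1` would force `x ∈ K`.
-/

open Polynomial IntermediateField

theorem pow_gcd_mem {E S : Type*} [DivisionRing E] [SetLike S E] [SubfieldClass S E] {K : S}
    {x : E} {m n : ℕ} (hm : x ^ m ∈ K) (hn : x ^ n ∈ K) : x ^ m.gcd n ∈ K := by
  rcases eq_or_ne x 0 with rfl | hx
  · rcases eq_or_ne (m.gcd n) 0 with h | h
    · simp [h]
    · simp [zero_pow h]
  rw [← zpow_natCast, Nat.gcd_eq_gcd_ab, zpow_add₀ hx, zpow_mul, zpow_mul]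
  exact mul_mem (zpow_mem (by exact_mod_cast hm) _) (zpow_mem (by exact_mod_cast hn) _)

namespace IntermediateField

variable {F E : Type*} [Field F] [Field E] [Algebra F E]

theorem finrank_adjoin_eq_two_of_quadratic {K : IntermediateField F E} {x a : E} (hx : x ∉ K)
    (ha : a ∈ K) (hxa : x ^ 2 + x + a = 0) : Module.finrank K K⟮x⟯ = 2 := by
  set p : K[X] := X ^ 2 + X + C ⟨a, ha⟩ with hp_def
  have hp : p.Monic := by rw [hp_def]; monicity!
  have hpx : aeval x p = 0 := by simpa [p] using hxa
  have hint : IsIntegral K x := ⟨p, hp, hpx⟩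
  refine (adjoin.finrank hint).trans (le_antisymm ?_ ?_)
  · calc (minpoly K x).natDegree ≤ p.natDegree :=
          natDegree_le_of_dvd (minpoly.dvd _ x hpx) hp.ne_zero
      _ = 2 := by rw [hp_def]; compute_degree!
  · exact (minpoly.two_le_natDegree_iff hint).2 fun ⟨y, hy⟩ ↦ hx (hy ▸ y.2)

variable (K : IntermediateField F E) [Finite K]

theorem mem_iff_pow_natCard_eq_self {x : E} : x ∈ K ↔ x ^ Nat.card K = x := by
  have := Fintype.ofFinite K
  rw [← Fintype.card_eq_nat_card]
  have hsplit : Splits (X ^ Fintype.card K - X : K[X]) := by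
    rw [splits_iff_card_roots, FiniteField.roots_X_pow_card_sub_X, ← Finset.card_def,
      Finset.card_univ, FiniteField.X_pow_card_sub_X_natDegree_eq _ Fintype.one_lt_card]
  have hroots := hsplit.roots_map K.val.toRingHom
  rw [FiniteField.roots_X_pow_card_sub_X] at hroots
  simpa [sub_eq_zero, iff_comm, FiniteField.X_pow_card_sub_X_ne_zero E Fintype.one_lt_card]
    using congrArg (x ∈ ·) hroots

theorem pow_natCard_add_one_eq_of_quadratic {x a : E} (hx : x ∉ K) (ha : a ∈ K)
    (hxa : x ^ 2 + x + a = 0) : x ^ (Nat.card K + 1) = a := by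
  have := Fintype.ofFinite K
  have hfrob := congrArg (FiniteField.frobeniusAlgHom K E) hxa
  simp only [map_add, map_pow, map_zero, FiniteField.frobeniusAlgHom_apply,
    Fintype.card_eq_nat_card, (K.mem_iff_pow_natCard_eq_self).1 ha] at hfrob
  have hne : x ^ Nat.card K - x ≠ 0 :=
    sub_ne_zero.2 fun h ↦ hx ((K.mem_iff_pow_natCard_eq_self).2 h)
  have hconj : x ^ Nat.card K + x + 1 = 0 :=
    (mul_eq_zero.1 (by linear_combination hfrob - hxa)).resolve_left hne
  linear_combination x * hconj - hxa

end IntermediateField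

section ConwayTower

local notation "F" => AlgebraicClosure (ZMod 2)

variable (c : ℕ → F)

theorem conwayL_zero : conwayL c 0 = ⊥ := by
  simp [conwayL]

theorem conwayL_succ (n : ℕ) :
    conwayL c (n + 1) = (adjoin (conwayL c n) {c n}).restrictScalars (ZMod 2) := by
  rw [conwayL, Set.Iio_add_one_eq_Iic, ← Set.Iio_union_right, Set.image_union,
    Set.image_singleton, ← adjoin_adjoin_left]
  rfl

variable {c} (hc0 : c 0 ^ 2 + c 0 + 1 = 0)
  (hrec : ∀ i : ℕ, c (i + 1) ^ 2 + c (i + 1) + ∏ j ∈ Finset.range (i + 1), c j = 0)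
  (hnot : ∀ i : ℕ, c (i + 1) ∉ conwayL c (i + 1))

include hc0 hrec in
theorem exists_quadratic_over_conwayL (n : ℕ) : ∃ a ∈ conwayL c n, c n ^ 2 + c n + a = 0 := by
  cases n with
  | zero => exact ⟨1, one_mem _, hc0⟩
  | succ i =>
    refine ⟨_, prod_mem fun j hj ↦ subset_adjoin _ _ ⟨j, ?_, rfl⟩, hrec i⟩
    simpa using hj

include hc0 hnot in
theorem notMem_conwayL_self (n : ℕ) : c n ∉ conwayL c n := by
  cases n with
  | zero =>
    rw [conwayL_zero, mem_bot]
    rintro ⟨y, hy⟩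
    have hy0 : y ^ 2 + y + 1 = 0 := (algebraMap (ZMod 2) F).injective <| by
      rwa [map_zero, map_add, map_add, map_pow, map_one, hy]
    exact (by decide : ∀ z : ZMod 2, z ^ 2 + z + 1 ≠ 0) y hy0
  | succ i => exact hnot i

include hc0 hrec hnot in
theorem finrank_conwayL (n : ℕ) : Module.finrank (ZMod 2) (conwayL c n) = 2 ^ n := by
  induction n with
  | zero => simp [conwayL_zero]
  | succ n ih =>
    obtain ⟨a, ha, hq⟩ := exists_quadratic_over_conwayL hc0 hrec n
    rw [conwayL_succ]
    change Module.finrank (ZMod 2) (adjoin (conwayL c n) {c n}) = _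
    rw [← Module.finrank_mul_finrank (ZMod 2) (conwayL c n), ih,
      finrank_adjoin_eq_two_of_quadratic (notMem_conwayL_self hc0 hnot n) ha hq, pow_succ]

include hc0 hrec hnot in
theorem natCard_conwayL (n : ℕ) : Nat.card (conwayL c n) = 2 ^ 2 ^ n := by
  have hfin := finrank_conwayL hc0 hrec hnot n
  have : Module.Finite (ZMod 2) (conwayL c n) := Module.finite_of_finrank_pos (by simp [hfin])
  rw [Module.natCard_eq_pow_finrank (K := ZMod 2), hfin, Nat.card_zmod]

end ConwayTower

theorem conway_gcd_gt_one_of_pow_mem_general (c : ℕ → AlgebraicClosure (ZMod 2))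
    (hc0 : c 0 ^ 2 + c 0 + 1 = 0)
    (hrec : ∀ i : ℕ, c (i + 1) ^ 2 + c (i + 1) + ∏ j ∈ Finset.range (i + 1), c j = 0)
    (hnot : ∀ i : ℕ, c (i + 1) ∉ conwayL c (i + 1))
    (u : ℕ) (l : ℕ)
    (hmem : c u ^ l ∈ conwayL c u) :
    1 < Nat.gcd l (fermatN u) := by
  have hcard := natCard_conwayL hc0 hrec hnot u
  have : Finite (conwayL c u) := Nat.finite_of_card_ne_zero (by simp [hcard])
  have hx := notMem_conwayL_self hc0 hnot u
  obtain ⟨a, ha, hxa⟩ := exists_quadratic_over_conwayL hc0 hrec u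
  have hnorm : c u ^ fermatN u ∈ conwayL c u := by
    rwa [fermatN, ← hcard, pow_natCard_add_one_eq_of_quadratic _ hx ha hxa]
  have hgcd : c u ^ l.gcd (fermatN u) ∈ conwayL c u := pow_gcd_mem hmem hnorm
  refine lt_of_le_of_ne (Nat.gcd_pos_of_pos_right _ (Nat.succ_pos _)) fun h ↦ hx ?_
  rwa [← h, pow_one] at hgcd

/-- For every `u ≥ 1`, if `(c_u)^l ∈ L_{u−1}` for a positive integer `l`,
then `gcd l N_u > 1`. -/
theorem conway_gcd_gt_one_of_pow_mem (c : ℕ → AlgebraicClosure (ZMod 2))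
    (hc0 : c 0 ^ 2 + c 0 + 1 = 0)
    (hrec : ∀ i : ℕ, c (i + 1) ^ 2 + c (i + 1) + ∏ j ∈ Finset.range (i + 1), c j = 0)
    (hnot : ∀ i : ℕ, c (i + 1) ∉ conwayL c (i + 1))
    (u : ℕ) (hu : 1 ≤ u) (l : ℕ) (hl : 0 < l)
    (hmem : c u ^ l ∈ conwayL c u) :
    1 < Nat.gcd l (fermatN u) :=
  conway_gcd_gt_one_of_pow_mem_general c hc0 hrec hnot u l hmem
end
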